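/- Let n ≥ ℓ ≥ 1, let σ² > 0, let U be a real n×n orthogonal matrix, let λ₁ ≥ λ₂ ≥ … ≥ λ_s > 0 and λᵢ = 0 for i > s, and set Σ_x = U·diag(λ₁,…,λ_n)·Uᵀ. Suppose η > 0 satisfies Σ_{i=1}^{min(ℓ,s)} max(η − σ²/λᵢ, 0) = ℓ, and define dᵢ = max(η − σ²/λᵢ, 0) for i ≤ min(ℓ,s) and dᵢ = 0 for min(ℓ,s) < i ≤ ℓ. Let Φ* = [diag(√d₁,…,√d_ℓ) 0_{ℓ×(n−ℓ)}]·Uᵀ. Then for every real ℓ×n matrix Φ with tr(Φ·Φᵀ) ≤ ℓ, MMSE(σ², Φ*) ≤ MMSE(σ², Φ); that is, the water-filling kernel Φ* minimizes the Gaussian MMSE subject to the trace constraint. -/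

import Mathlib

/-!
Write `Σ_x = U Λ Uᵀ`. By the push-through identity `MMSE(Φ) = σ² tr((σ² I + Q)⁻¹ Λ)` with the
gain matrix `Q = Λ^{1/2} Uᵀ Φᵀ Φ U Λ^{1/2}`. Diagonalising `Q = V diag(β) Vᵀ` turns this into
`∑ⱼ σ² λ̃ⱼ / (σ² + βⱼ)`, where `λ̃ = T λ` for the doubly stochastic matrix `Tⱼᵢ = Vᵢⱼ²`; at most `ℓ`
of the `βⱼ` are nonzero and the trace constraint becomes `∑ⱼ βⱼ ∑ᵢ Tⱼᵢ / λᵢ ≤ ℓ`.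
Adding the constraint with the Lagrange multiplier `σ²/η²`, every active channel is bounded below
through the concave function `g(x) = min_{γ ≥ 0} σ² x / (σ² + x γ) + σ² γ / η²` (Jensen for `T`,
Cauchy–Schwarz for the constraint). Since `x - g(x)` is nondecreasing, the bound is weakest when
the active channels are the `ℓ` largest eigenvalues, and there the water-filling kernel attains it.
-/

open Matrix Finset

/-- The water-filling power `(η - σ2 / x)⁺`; the `if` makes it vanish at `x = 0`, where
`σ2 / 0 = 0` would give `η`. -/
noncomputable def wfPower (σ2 η x : ℝ) : ℝ := if x * η ≤ σ2 then 0 else η - σ2 / x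

/-- The Lagrangian `σ2 x / (σ2 + x γ) + (σ2 / η²) γ` of a channel of variance `x`, at its
minimiser `γ = wfPower σ2 η x` (see `wfValue_le`). -/
noncomputable def wfValue (σ2 η x : ℝ) : ℝ :=
  σ2 * x / (σ2 + x * wfPower σ2 η x) + σ2 / η ^ 2 * wfPower σ2 η x

lemma sum_mul_le_sum_of_forall_le {ι : Type*} [Fintype ι] [DecidableEq ι] (w φ : ι → ℝ)
    (I : Finset ι) (hw0 : ∀ i, 0 ≤ w i) (hw1 : ∀ i, w i ≤ 1) (hφ : ∀ i, 0 ≤ φ i)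
    (hI : ∀ i ∈ I, ∀ k ∉ I, φ k ≤ φ i) (hw : ∑ i, w i ≤ #I) :
    ∑ i, w i * φ i ≤ ∑ i ∈ I, φ i := by
  obtain ⟨t, ht0, htI, htIc⟩ : ∃ t, 0 ≤ t ∧ (∀ i ∈ I, t ≤ φ i) ∧ ∀ k ∉ I, φ k ≤ t := by
    rcases Iᶜ.eq_empty_or_nonempty with h | h
    · exact ⟨0, le_rfl, fun i _ => hφ i, fun k hk => absurd (mem_compl.2 hk) (by simp [h])⟩
    · obtain ⟨k₀, hk₀, hmax⟩ := exists_max_image Iᶜ φ h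
      exact ⟨φ k₀, hφ k₀, fun i hi => hI i hi k₀ (mem_compl.1 hk₀),
        fun k hk => hmax k (mem_compl.2 hk)⟩
  have hin : ∀ i ∈ I, w i * φ i ≤ φ i - (1 - w i) * t := fun i hi => by
    nlinarith [hw1 i, htI i hi]
  have hout : ∀ k ∈ Iᶜ, w k * φ k ≤ w k * t := fun k hk =>
    mul_le_mul_of_nonneg_left (htIc k (mem_compl.1 hk)) (hw0 k)
  have hsplit := sum_add_sum_compl I w
  calc ∑ i, w i * φ i = ∑ i ∈ I, w i * φ i + ∑ k ∈ Iᶜ, w k * φ k := (sum_add_sum_compl I _).symm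
    _ ≤ ∑ i ∈ I, (φ i - (1 - w i) * t) + ∑ k ∈ Iᶜ, w k * t :=
        add_le_add (sum_le_sum hin) (sum_le_sum hout)
    _ = ∑ i ∈ I, φ i - (#I - ∑ i, w i) * t := by
        rw [← hsplit, sum_sub_distrib, ← sum_mul, ← sum_mul, sum_sub_distrib]
        simp only [sum_const, nsmul_eq_mul, mul_one]
        ring
    _ ≤ ∑ i ∈ I, φ i := by nlinarith

lemma one_le_sum_mul_mul_sum_div {ι : Type*} (s : Finset ι) (w x : ι → ℝ)
    (hw : ∀ i ∈ s, 0 ≤ w i) (hw1 : ∑ i ∈ s, w i = 1) (hx : ∀ i ∈ s, 0 ≤ x i)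
    (hsupp : ∀ i ∈ s, x i = 0 → w i = 0) :
    1 ≤ (∑ i ∈ s, w i * x i) * ∑ i ∈ s, w i / x i := by
  classical
  set P := s.filter fun i => w i ≠ 0
  have hpos : ∀ i ∈ P, 0 < w i * x i := fun i hi => by
    obtain ⟨his, hwi⟩ := mem_filter.1 hi
    exact mul_pos ((hw i his).lt_of_ne' hwi) ((hx i his).lt_of_ne' fun h => hwi (hsupp i his h))
  have hP : ∀ f : ι → ℝ, (∀ i ∈ s, w i = 0 → f i = 0) → ∑ i ∈ P, f i = ∑ i ∈ s, f i :=
    fun f hf => sum_filter_of_ne fun i hi hfi => fun hwi => hfi (hf i hi hwi)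
  have hsed := sq_sum_div_le_sum_sq_div P w hpos
  rw [hP w (fun _ _ h => h), hw1, hP _ (fun i _ h => by simp [h])] at hsed
  have heq : ∑ i ∈ P, w i ^ 2 / (w i * x i) = ∑ i ∈ s, w i / x i := by
    rw [← hP (fun i => w i / x i) (fun i _ h => by simp [h])]
    exact sum_congr rfl fun i hi => by
      rw [sq, mul_div_mul_left _ _ (mem_filter.1 hi).2]
  rw [heq] at hsed
  have hz : 0 < ∑ i ∈ s, w i * x i := by
    rw [← hP (fun i => w i * x i) (fun i _ h => by simp [h])]
    refine sum_pos (fun i hi => hpos i hi) ?_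
    by_contra hP0
    rw [not_nonempty_iff_eq_empty] at hP0
    have := hP w (fun _ _ h => h)
    rw [hP0, sum_empty, hw1] at this
    exact zero_ne_one this
  rw [one_pow, div_le_iff₀ hz] at hsed
  linarith

section WaterFilling

variable {σ2 η : ℝ}

lemma wfPower_nonneg (hσ2 : 0 < σ2) (hη : 0 < η) (x : ℝ) : 0 ≤ wfPower σ2 η x := by
  unfold wfPower
  split_ifs with h
  · exact le_rfl
  · have hx : 0 < x := by nlinarith
    rw [sub_nonneg, div_le_iff₀ hx]
    linarith

lemma wfPower_eq_max {x : ℝ} (hx : 0 < x) : wfPower σ2 η x = max (η - σ2 / x) 0 := by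
  unfold wfPower
  split_ifs with h
  · rw [max_eq_right (by rw [sub_nonpos, le_div_iff₀ hx]; linarith)]
  · rw [max_eq_left (by rw [sub_nonneg, div_le_iff₀ hx]; linarith)]

lemma wfPower_zero (hσ2 : 0 < σ2) : wfPower σ2 η 0 = 0 := by
  simp [wfPower, hσ2.le]

lemma wfValue_le (hσ2 : 0 < σ2) (hη : 0 < η) {x γ : ℝ} (hx : 0 ≤ x) (hγ : 0 ≤ γ) :
    wfValue σ2 η x ≤ σ2 * x / (σ2 + x * γ) + σ2 / η ^ 2 * γ := by
  have hden : 0 < σ2 + x * γ := by positivity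
  unfold wfValue wfPower
  split_ifs with h
  · rw [mul_zero, add_zero, mul_zero, add_zero, mul_div_cancel_left₀ _ hσ2.ne', ← sub_nonneg]
    have key : σ2 * x / (σ2 + x * γ) + σ2 / η ^ 2 * γ - x =
        γ * ((σ2 - x * η) * (σ2 + x * η) + σ2 * x * γ) / (η ^ 2 * (σ2 + x * γ)) := by
      field_simp
      ring
    rw [key]
    have : 0 ≤ (σ2 - x * η) * (σ2 + x * η) := mul_nonneg (by linarith) (by positivity)
    positivity
  · have hx0 : 0 < x := by nlinarith
    have key : σ2 * x / (σ2 + x * γ) + σ2 / η ^ 2 * γ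
          - (σ2 * x / (σ2 + x * (η - σ2 / x)) + σ2 / η ^ 2 * (η - σ2 / x)) =
        σ2 * (η * x - σ2 - x * γ) ^ 2 / (η ^ 2 * x * (σ2 + x * γ)) := by
      have : σ2 + x * (η - σ2 / x) = x * η := by field_simp; ring
      rw [this]
      field_simp
      ring
    rw [← sub_nonneg, key]
    positivity

lemma wfValue_le_self (hσ2 : 0 < σ2) (hη : 0 < η) {x : ℝ} (hx : 0 ≤ x) : wfValue σ2 η x ≤ x := by
  simpa [mul_div_cancel_left₀ _ hσ2.ne'] using wfValue_le hσ2 hη hx le_rfl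

lemma div_add_mul_le_tangent (hσ2 : 0 < σ2) {x z γ : ℝ} (hx : 0 ≤ x) (hz : 0 ≤ z) (hγ : 0 ≤ γ) :
    σ2 * x / (σ2 + x * γ) ≤ σ2 * z / (σ2 + z * γ) + σ2 ^ 2 / (σ2 + z * γ) ^ 2 * (x - z) := by
  have hdx : 0 < σ2 + x * γ := by positivity
  have hdz : 0 < σ2 + z * γ := by positivity
  have key : σ2 * z / (σ2 + z * γ) + σ2 ^ 2 / (σ2 + z * γ) ^ 2 * (x - z) - σ2 * x / (σ2 + x * γ)
      = σ2 ^ 2 * γ * (x - z) ^ 2 / ((σ2 + z * γ) ^ 2 * (σ2 + x * γ)) := by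
    field_simp
    ring
  rw [← sub_nonneg, key]
  positivity

lemma sub_wfValue_le_sub (hσ2 : 0 < σ2) (hη : 0 < η) {x y : ℝ} (hx : 0 ≤ x) (hxy : x ≤ y) :
    x - wfValue σ2 η x ≤ y - wfValue σ2 η y := by
  set γ := wfPower σ2 η x
  have hγ : 0 ≤ γ := wfPower_nonneg hσ2 hη x
  have hslope : σ2 ^ 2 / (σ2 + x * γ) ^ 2 ≤ 1 := by
    rw [div_le_one (by positivity)]
    exact pow_le_pow_left₀ hσ2.le (by nlinarith) 2
  have hy := wfValue_le hσ2 hη (hx.trans hxy) hγ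
  have htan := div_add_mul_le_tangent hσ2 (hx.trans hxy) hx hγ
  have : σ2 ^ 2 / (σ2 + x * γ) ^ 2 * (y - x) ≤ y - x :=
    mul_le_of_le_one_left (by linarith) hslope
  unfold wfValue at hy ⊢
  linarith

lemma sum_mul_wfValue_le {ι : Type*} (s : Finset ι) (hσ2 : 0 < σ2) (hη : 0 < η) (w x : ι → ℝ)
    (hw : ∀ i ∈ s, 0 ≤ w i) (hw1 : ∑ i ∈ s, w i = 1) (hx : ∀ i ∈ s, 0 ≤ x i) :
    ∑ i ∈ s, w i * wfValue σ2 η (x i) ≤ wfValue σ2 η (∑ i ∈ s, w i * x i) := by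
  set z := ∑ i ∈ s, w i * x i
  set γ := wfPower σ2 η z
  have hz : 0 ≤ z := sum_nonneg fun i hi => mul_nonneg (hw i hi) (hx i hi)
  have hγ : 0 ≤ γ := wfPower_nonneg hσ2 hη z
  set a := σ2 * z / (σ2 + z * γ) + σ2 / η ^ 2 * γ
  set b := σ2 ^ 2 / (σ2 + z * γ) ^ 2
  calc ∑ i ∈ s, w i * wfValue σ2 η (x i)
      ≤ ∑ i ∈ s, w i * (a + b * (x i - z)) := by
        refine sum_le_sum fun i hi => mul_le_mul_of_nonneg_left ?_ (hw i hi)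
        have := div_add_mul_le_tangent hσ2 (hx i hi) hz hγ
        linarith [wfValue_le hσ2 hη (hx i hi) hγ]
    _ = ∑ i ∈ s, ((a - b * z) * w i + b * (w i * x i)) := sum_congr rfl fun i _ => by ring
    _ = (a - b * z) * ∑ i ∈ s, w i + b * z := by rw [sum_add_distrib, ← mul_sum, ← mul_sum]
    _ = wfValue σ2 η z := by rw [hw1]; unfold wfValue; ring

lemma sum_mul_wfValue_sub_le {ι : Type*} (s : Finset ι) (hσ2 : 0 < σ2) (hη : 0 < η)
    (w x : ι → ℝ) (hw : ∀ i ∈ s, 0 ≤ w i) (hw1 : ∑ i ∈ s, w i = 1) (hx : ∀ i ∈ s, 0 ≤ x i)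
    (hsupp : ∀ i ∈ s, x i = 0 → w i = 0) {β : ℝ} (hβ : 0 ≤ β) :
    ∑ i ∈ s, w i * wfValue σ2 η (x i) - σ2 / η ^ 2 * (β * ∑ i ∈ s, w i / x i)
      ≤ σ2 * (∑ i ∈ s, w i * x i) / (σ2 + β) := by
  set z := ∑ i ∈ s, w i * x i
  have hCS := one_le_sum_mul_mul_sum_div s w x hw hw1 hx hsupp
  have hz : 0 < z := by
    refine (sum_nonneg fun i hi => mul_nonneg (hw i hi) (hx i hi)).lt_of_ne' fun h => ?_
    rw [h, zero_mul] at hCS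
    linarith
  have hjensen := sum_mul_wfValue_le s hσ2 hη w x hw hw1 hx
  have htangent := wfValue_le hσ2 hη hz.le (div_nonneg hβ hz.le)
  rw [mul_div_cancel₀ _ hz.ne'] at htangent
  have hγ : β / z ≤ β * ∑ i ∈ s, w i / x i := by
    rw [div_le_iff₀ hz]
    nlinarith
  have hc : 0 ≤ σ2 / η ^ 2 := by positivity
  nlinarith

lemma sum_div_add_mul_ite_wfPower {ι : Type*} [Fintype ι] [DecidableEq ι] (hσ2 : 0 < σ2)
    (lam : ι → ℝ) (I : Finset ι) :
    ∑ i, σ2 * lam i / (σ2 + lam i * if i ∈ I then wfPower σ2 η (lam i) else 0)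
      = ∑ i, lam i - ∑ i ∈ I, (lam i - wfValue σ2 η (lam i))
        - σ2 / η ^ 2 * ∑ i ∈ I, wfPower σ2 η (lam i) := by
  rw [mul_sum, sub_sub, ← sum_add_distrib, ← sum_ite_mem_eq I, ← sum_sub_distrib]
  refine sum_congr rfl fun i _ => ?_
  split_ifs
  · rw [wfValue]
    ring
  · rw [mul_zero, add_zero, mul_div_cancel_left₀ _ hσ2.ne', sub_zero]

theorem waterfilling_le {ι : Type*} [Fintype ι] [DecidableEq ι] (hσ2 : 0 < σ2) (hη : 0 < η)
    (lam : ι → ℝ) (hlam : ∀ i, 0 ≤ lam i) (I : Finset ι) (hI : ∀ i ∈ I, ∀ k ∉ I, lam k ≤ lam i)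
    (T : ι → ι → ℝ) (hT : ∀ j i, 0 ≤ T j i) (hTrow : ∀ j, ∑ i, T j i = 1)
    (hTcol : ∀ i, ∑ j, T j i = 1) (β : ι → ℝ) (hβ : ∀ j, 0 ≤ β j)
    (hsupp : ∀ j i, β j ≠ 0 → lam i = 0 → T j i = 0) (hcard : #{j | β j ≠ 0} ≤ #I)
    (hbudget : ∑ j, β j * ∑ i, T j i / lam i ≤ ∑ i ∈ I, wfPower σ2 η (lam i)) :
    ∑ i, σ2 * lam i / (σ2 + lam i * if i ∈ I then wfPower σ2 η (lam i) else 0)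
      ≤ ∑ j, σ2 * (∑ i, T j i * lam i) / (σ2 + β j) := by
  rw [sum_div_add_mul_ite_wfPower hσ2]
  set c := σ2 / η ^ 2
  set J : Finset ι := {j | β j ≠ 0}
  set φ : ι → ℝ := fun i => lam i - wfValue σ2 η (lam i)
  set u : ι → ℝ := fun i => ∑ j ∈ J, T j i
  have hu1 : ∀ i, u i ≤ 1 := fun i =>
    (hTcol i) ▸ sum_le_sum_of_subset_of_nonneg (subset_univ J) fun j _ _ => hT j i
  have hu : ∑ i, u i = #J := by
    simp only [u]
    rw [sum_comm, sum_congr rfl fun j _ => hTrow j, sum_const, nsmul_one]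
  have hthreshold : ∑ i, u i * φ i ≤ ∑ i ∈ I, φ i :=
    sum_mul_le_sum_of_forall_le u φ I (fun i => sum_nonneg fun j _ => hT j i) hu1
      (fun i => sub_nonneg.2 (wfValue_le_self hσ2 hη (hlam i)))
      (fun i hi k hk => sub_wfValue_le_sub hσ2 hη (hlam k) (hI i hi k hk))
      (by rw [hu]; exact_mod_cast hcard)
  have hchannel : ∀ j, ∑ i, T j i * lam i - (if j ∈ J then ∑ i, T j i * φ i else 0)
      - c * (β j * ∑ i, T j i / lam i) ≤ σ2 * (∑ i, T j i * lam i) / (σ2 + β j) := fun j => by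
    split_ifs with hj
    · have := sum_mul_wfValue_sub_le univ hσ2 hη (T j) lam (fun i _ => hT j i) (hTrow j)
        (fun i _ => hlam i) (fun i _ => hsupp j i (mem_filter.1 hj).2) (hβ j)
      simpa only [φ, mul_sub, sum_sub_distrib, sub_sub_cancel] using this
    · have hβj : β j = 0 := by simpa [J] using hj
      rw [hβj, zero_mul, mul_zero, add_zero, mul_div_cancel_left₀ _ hσ2.ne']
      simp
  have hrhs : ∑ i, lam i - ∑ i, u i * φ i - c * ∑ j, β j * ∑ i, T j i / lam i
      ≤ ∑ j, σ2 * (∑ i, T j i * lam i) / (σ2 + β j) := by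
    refine le_of_eq_of_le ?_ (sum_le_sum fun j _ => hchannel j)
    rw [sum_sub_distrib, sum_sub_distrib, ← mul_sum, sum_ite_mem_eq, sum_comm]
    simp only [u, sum_mul]
    rw [sum_comm (s := J)]
    simp only [← sum_mul, hTcol, one_mul]
  have hc : 0 ≤ c := by positivity
  nlinarith

end WaterFilling

noncomputable def gaussianMMSE {ι κ : Type*} [Fintype ι] [Fintype κ] [DecidableEq κ] (σ2 : ℝ)
    (Sx : Matrix ι ι ℝ) (Φ : Matrix κ ι ℝ) : ℝ :=
  (Sx - Sx * Φᵀ * (σ2 • (1 : Matrix κ κ ℝ) + Φ * Sx * Φᵀ)⁻¹ * Φ * Sx).trace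

section Matrices

variable {ι κ : Type*} [Fintype ι] [Fintype κ] [DecidableEq κ] {σ2 : ℝ}

lemma posDef_smul_one_add_mul_transpose (hσ2 : 0 < σ2) (X : Matrix κ ι ℝ) :
    (σ2 • (1 : Matrix κ κ ℝ) + X * Xᵀ).PosDef := by
  have h1 : (σ2 • (1 : Matrix κ κ ℝ)).PosDef := by
    rw [smul_one_eq_diagonal]
    exact PosDef.diagonal fun _ => hσ2
  simpa [conjTranspose_eq_transpose_of_trivial] using
    h1.add_posSemidef (posSemidef_self_mul_conjTranspose X)

lemma transpose_mul_inv_mul_eq [DecidableEq ι] (hσ2 : 0 < σ2) (X : Matrix κ ι ℝ) :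
    Xᵀ * (σ2 • (1 : Matrix κ κ ℝ) + X * Xᵀ)⁻¹ * X = 1 - σ2 • (σ2 • 1 + Xᵀ * X)⁻¹ := by
  set W := σ2 • (1 : Matrix κ κ ℝ) + X * Xᵀ
  set N := σ2 • (1 : Matrix ι ι ℝ) + Xᵀ * X
  have hW : IsUnit W.det :=
    (isUnit_iff_isUnit_det W).mp (posDef_smul_one_add_mul_transpose hσ2 X).isUnit
  have hN : IsUnit N.det := (isUnit_iff_isUnit_det N).mp <| by
    simpa using (posDef_smul_one_add_mul_transpose hσ2 Xᵀ).isUnit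
  have hpush : Xᵀ * W = N * Xᵀ := by
    simp only [W, N, Matrix.mul_add, Matrix.add_mul, Matrix.mul_smul, Matrix.smul_mul,
      Matrix.mul_one, Matrix.one_mul, Matrix.mul_assoc]
  have hpush' : Xᵀ * W⁻¹ = N⁻¹ * Xᵀ := by
    calc Xᵀ * W⁻¹ = N⁻¹ * (N * Xᵀ) * W⁻¹ := by
          rw [← Matrix.mul_assoc, nonsing_inv_mul _ hN, Matrix.one_mul]
      _ = N⁻¹ * Xᵀ := by
          rw [← hpush, Matrix.mul_assoc, Matrix.mul_assoc, mul_nonsing_inv _ hW, Matrix.mul_one]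
  rw [hpush', Matrix.mul_assoc, show Xᵀ * X = N - σ2 • 1 by simp [N], Matrix.mul_sub,
    nonsing_inv_mul _ hN, Matrix.mul_smul, Matrix.mul_one]

lemma gaussianMMSE_mul_transpose {ν : Type*} [Fintype ν] [DecidableEq ν] (hσ2 : 0 < σ2)
    (R : Matrix ι ν ℝ) (Φ : Matrix κ ι ℝ) :
    gaussianMMSE σ2 (R * Rᵀ) Φ
      = σ2 * ((σ2 • (1 : Matrix ν ν ℝ) + (Φ * R)ᵀ * (Φ * R))⁻¹ * (Rᵀ * R)).trace := by
  have hW : Φ * (R * Rᵀ) * Φᵀ = Φ * R * (Φ * R)ᵀ := by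
    simp only [transpose_mul, Matrix.mul_assoc]
  have hgain : ∀ M : Matrix κ κ ℝ,
      R * Rᵀ * Φᵀ * M * Φ * (R * Rᵀ) = R * ((Φ * R)ᵀ * M * (Φ * R)) * Rᵀ := fun M => by
    simp only [transpose_mul, Matrix.mul_assoc]
  rw [gaussianMMSE, hW, hgain, transpose_mul_inv_mul_eq hσ2, trace_sub, trace_mul_cycle,
    trace_mul_comm R, Matrix.mul_sub, Matrix.mul_one, Matrix.mul_smul, trace_sub, trace_smul,
    trace_mul_comm (Rᵀ * R), smul_eq_mul, sub_sub_cancel]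

variable [DecidableEq ι]

lemma mul_diagonal_mul_transpose_apply_self (V : Matrix ι ι ℝ) (β : ι → ℝ) (i : ι) :
    (V * diagonal β * Vᵀ) i i = ∑ j, β j * V i j ^ 2 := by
  rw [mul_apply]
  simp only [mul_diagonal, transpose_apply]
  exact sum_congr rfl fun j _ => by ring

lemma trace_inv_conj_diagonal_mul_diagonal (hσ2 : 0 < σ2) {V : Matrix ι ι ℝ} (hV : Vᵀ * V = 1)
    {β : ι → ℝ} (hβ : ∀ j, 0 ≤ β j) (lam : ι → ℝ) :
    σ2 * ((σ2 • 1 + V * diagonal β * Vᵀ)⁻¹ * diagonal lam).trace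
      = ∑ j, σ2 * (∑ i, V i j ^ 2 * lam i) / (σ2 + β j) := by
  have hVV : V * Vᵀ = 1 := mul_eq_one_comm.mp hV
  have hconj : σ2 • 1 + V * diagonal β * Vᵀ = V * diagonal (fun j => σ2 + β j) * Vᵀ := by
    rw [← diagonal_add, ← smul_one_eq_diagonal, Matrix.mul_add, Matrix.add_mul, Matrix.mul_smul,
      Matrix.mul_one, Matrix.smul_mul, hVV]
  have hinv : (V * diagonal (fun j => σ2 + β j) * Vᵀ)⁻¹
      = V * diagonal (fun j => (σ2 + β j)⁻¹) * Vᵀ := by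
    refine inv_eq_right_inv ?_
    rw [show V * diagonal (fun j => σ2 + β j) * Vᵀ * (V * diagonal (fun j => (σ2 + β j)⁻¹) * Vᵀ)
        = V * (diagonal (fun j => σ2 + β j) * (Vᵀ * V) * diagonal (fun j => (σ2 + β j)⁻¹)) * Vᵀ
        by simp only [Matrix.mul_assoc], hV, Matrix.mul_one, diagonal_mul_diagonal]
    rw [show (fun j => (σ2 + β j) * (σ2 + β j)⁻¹) = fun _ => 1 from
      funext fun j => mul_inv_cancel₀ (by linarith [hβ j]), diagonal_one,
      Matrix.mul_one, hVV]
  rw [hconj, hinv, trace]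
  simp only [diag_apply, mul_diagonal, mul_diagonal_mul_transpose_apply_self, sum_mul, mul_sum]
  rw [sum_comm]
  refine sum_congr rfl fun j _ => ?_
  rw [sum_div]
  exact sum_congr rfl fun i _ => by ring

lemma Matrix.PosSemidef.exists_orthogonal_diagonal {Q : Matrix ι ι ℝ} (hQ : Q.PosSemidef) :
    ∃ (V : Matrix ι ι ℝ) (β : ι → ℝ), Vᵀ * V = 1 ∧ (∀ j, 0 ≤ β j) ∧
      Q = V * diagonal β * Vᵀ ∧ #{j | β j ≠ 0} = Q.rank := by
  refine ⟨hQ.isHermitian.eigenvectorUnitary, hQ.isHermitian.eigenvalues, ?_,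
    hQ.eigenvalues_nonneg, ?_, ?_⟩
  · simp [← conjTranspose_eq_transpose_of_trivial, ← star_eq_conjTranspose]
  · conv_lhs => rw [hQ.isHermitian.spectral_theorem]
    simp [Unitary.conjStarAlgAut_apply, star_eq_conjTranspose]
  · rw [hQ.isHermitian.rank_eq_card_non_zero_eigs, Fintype.card_subtype]

lemma apply_eq_zero_of_eq_conj_diagonal {V Q : Matrix ι ι ℝ} {β : ι → ℝ} (hV : Vᵀ * V = 1)
    (hQ : Q = V * diagonal β * Vᵀ) {i j : ι} (hrow : ∀ k, Q i k = 0) (hβ : β j ≠ 0) :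
    V i j = 0 := by
  have h : Q * V = V * diagonal β := by rw [hQ, Matrix.mul_assoc, hV, Matrix.mul_one]
  have hij := congrFun₂ h i j
  rw [mul_diagonal, mul_apply] at hij
  simp only [hrow, zero_mul, sum_const_zero] at hij
  exact (mul_eq_zero.1 hij.symm).resolve_right hβ

lemma sum_diag_sqrt_conj_div_le_trace {lam : ι → ℝ} (hlam : ∀ i, 0 ≤ lam i) (G : Matrix ι ι ℝ)
    (hG : ∀ i, 0 ≤ G i i) :
    ∑ i, (diagonal (fun i => √(lam i)) * G * diagonal (fun i => √(lam i))) i i / lam i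
      ≤ G.trace := by
  refine sum_le_sum fun i _ => ?_
  rw [mul_diagonal, diagonal_mul, mul_right_comm, Real.mul_self_sqrt (hlam i)]
  rcases (hlam i).eq_or_lt with h | h
  · rw [← h, div_zero]
    exact hG i
  · rw [mul_div_cancel_left₀ _ h.ne']
    rfl

lemma sum_sq_col_eq_one {V : Matrix ι ι ℝ} (hV : Vᵀ * V = 1) (j : ι) : ∑ i, V i j ^ 2 = 1 := by
  simpa [mul_apply, sq] using congrFun₂ hV j j

lemma sum_sq_row_eq_one {V : Matrix ι ι ℝ} (hV : Vᵀ * V = 1) (i : ι) : ∑ j, V i j ^ 2 = 1 :=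
  sum_sq_col_eq_one (V := Vᵀ) (by rw [transpose_transpose, mul_eq_one_comm.mp hV]) i

lemma gaussianMMSE_conj_diagonal (hσ2 : 0 < σ2) {U : Matrix ι ι ℝ} (hU : Uᵀ * U = 1)
    {lam : ι → ℝ} (hlam : ∀ i, 0 ≤ lam i) (Φ : Matrix κ ι ℝ) :
    gaussianMMSE σ2 (U * diagonal lam * Uᵀ) Φ
      = σ2 * ((σ2 • 1 + diagonal (fun i => √(lam i)) * ((Φ * U)ᵀ * (Φ * U))
          * diagonal (fun i => √(lam i)))⁻¹ * diagonal lam).trace := by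
  set S := diagonal fun i => √(lam i)
  have hS : Sᵀ = S := diagonal_transpose _
  have hSS : S * S = diagonal lam := by
    rw [diagonal_mul_diagonal]
    exact congrArg diagonal (funext fun i => Real.mul_self_sqrt (hlam i))
  have hR : U * diagonal lam * Uᵀ = U * S * (U * S)ᵀ := by
    rw [transpose_mul, hS, ← hSS]
    simp only [Matrix.mul_assoc]
  have hRR : (U * S)ᵀ * (U * S) = diagonal lam := by
    rw [transpose_mul, hS, Matrix.mul_assoc, ← Matrix.mul_assoc Uᵀ, hU, Matrix.one_mul, hSS]
  rw [hR, gaussianMMSE_mul_transpose hσ2, hRR]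
  simp only [transpose_mul, hS, Matrix.mul_assoc]

/-- `V` and `β` diagonalise the gain matrix `Λ^{1/2} Uᵀ Φᵀ Φ U Λ^{1/2}`. -/
theorem exists_gaussianMMSE_eq_sum (hσ2 : 0 < σ2) {U : Matrix ι ι ℝ} (hU : Uᵀ * U = 1)
    {lam : ι → ℝ} (hlam : ∀ i, 0 ≤ lam i) (Φ : Matrix κ ι ℝ) :
    ∃ (V : Matrix ι ι ℝ) (β : ι → ℝ), Vᵀ * V = 1 ∧ (∀ j, 0 ≤ β j) ∧
      (∀ j i, β j ≠ 0 → lam i = 0 → V i j = 0) ∧ #{j | β j ≠ 0} ≤ Fintype.card κ ∧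
      ∑ j, β j * ∑ i, V i j ^ 2 / lam i ≤ (Φ * Φᵀ).trace ∧
      gaussianMMSE σ2 (U * diagonal lam * Uᵀ) Φ
        = ∑ j, σ2 * (∑ i, V i j ^ 2 * lam i) / (σ2 + β j) := by
  set S := diagonal fun i => √(lam i)
  set G := (Φ * U)ᵀ * (Φ * U)
  have hQ : S * G * S = (Φ * U * S)ᵀ * (Φ * U * S) := by
    simp only [G, S, transpose_mul, diagonal_transpose, Matrix.mul_assoc]
  have hpsd : (S * G * S).PosSemidef := by
    simpa [hQ] using posSemidef_conjTranspose_mul_self (Φ * U * S)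
  obtain ⟨V, β, hV, hβ, hdecomp, hrank⟩ := hpsd.exists_orthogonal_diagonal
  refine ⟨V, β, hV, hβ, fun j i hj hi =>
    apply_eq_zero_of_eq_conj_diagonal hV hdecomp (fun k => ?_) hj, ?_, ?_, ?_⟩
  · rw [Matrix.mul_assoc, diagonal_mul, hi, Real.sqrt_zero, zero_mul]
  · rw [hrank, hQ, rank_transpose_mul_self]
    exact rank_le_card_height _
  · calc ∑ j, β j * ∑ i, V i j ^ 2 / lam i = ∑ i, (S * G * S) i i / lam i := by
          simp only [hdecomp, mul_diagonal_mul_transpose_apply_self, mul_sum, sum_div]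
          rw [sum_comm]
          exact sum_congr rfl fun i _ => sum_congr rfl fun j _ => by ring
      _ ≤ G.trace := sum_diag_sqrt_conj_div_le_trace hlam G fun i =>
          sum_nonneg fun k _ => mul_self_nonneg _
      _ = (Φ * Φᵀ).trace := by
          rw [trace_mul_comm, transpose_mul, Matrix.mul_assoc, ← Matrix.mul_assoc U,
            mul_eq_one_comm.mp hU, Matrix.one_mul]
  · rw [gaussianMMSE_conj_diagonal hσ2 hU hlam, hdecomp,
      trace_inv_conj_diagonal_mul_diagonal hσ2 hV hβ]

lemma gaussianMMSE_mul_transpose_eq_sum (hσ2 : 0 < σ2) {U : Matrix ι ι ℝ} (hU : Uᵀ * U = 1)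
    {lam : ι → ℝ} (hlam : ∀ i, 0 ≤ lam i) {E : Matrix κ ι ℝ} {D : ι → ℝ}
    (hE : Eᵀ * E = diagonal D) :
    gaussianMMSE σ2 (U * diagonal lam * Uᵀ) (E * Uᵀ) = ∑ i, σ2 * lam i / (σ2 + lam i * D i) := by
  have hD : ∀ i, 0 ≤ lam i * D i := fun i => mul_nonneg (hlam i) <| by
    rw [← diagonal_apply_eq D i, ← hE, mul_apply]
    exact sum_nonneg fun k _ => mul_self_nonneg _
  have hQ : diagonal (fun i => √(lam i)) * ((E * Uᵀ * U)ᵀ * (E * Uᵀ * U))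
      * diagonal (fun i => √(lam i)) = 1 * diagonal (fun i => lam i * D i) * 1ᵀ := by
    rw [Matrix.mul_assoc E, hU, Matrix.mul_one, hE, diagonal_mul_diagonal, diagonal_mul_diagonal,
      transpose_one, Matrix.mul_one, Matrix.one_mul]
    exact congrArg diagonal (funext fun i => by rw [mul_right_comm, Real.mul_self_sqrt (hlam i)])
  rw [gaussianMMSE_conj_diagonal hσ2 hU hlam, hQ,
    trace_inv_conj_diagonal_mul_diagonal hσ2 (by simp) hD]
  simp [one_apply]

end Matrices

lemma Fin.mem_map_castLEEmb_univ {l n : ℕ} (hln : l ≤ n) (j : Fin n) :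
    j ∈ univ.map (Fin.castLEEmb hln) ↔ (j : ℕ) < l :=
  ⟨fun hj => by obtain ⟨a, -, rfl⟩ := mem_map.1 hj; simp,
    fun hj => mem_map.2 ⟨⟨j, hj⟩, mem_univ _, rfl⟩⟩

lemma padded_sqrt_diagonal_transpose_mul_self {l n : ℕ} (hln : l ≤ n) (f : Fin n → ℝ)
    (hf : ∀ j, 0 ≤ f j) :
    (of fun (a : Fin l) (j : Fin n) => if (j : ℕ) = a then √(f (Fin.castLE hln a)) else 0)ᵀ
        * (of fun (a : Fin l) (j : Fin n) => if (j : ℕ) = a then √(f (Fin.castLE hln a)) else 0)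
      = diagonal fun j => if j ∈ univ.map (Fin.castLEEmb hln) then f j else 0 := by
  ext j k
  rw [mul_apply, diagonal_apply]
  simp only [transpose_apply, of_apply]
  by_cases hjk : j = k
  · subst hjk
    rw [if_pos rfl]
    split_ifs with h
    · obtain ⟨a, -, rfl⟩ := mem_map.1 h
      rw [sum_eq_single a fun b _ hb => by
        rw [if_neg fun h' => hb (Fin.ext h'.symm), zero_mul]]
      · simp [Real.mul_self_sqrt (hf _)]
      · simp
    · exact sum_eq_zero fun a _ => by
        rw [if_neg fun h' => h (mem_map.2 ⟨a, mem_univ _, Fin.ext h'.symm⟩), zero_mul]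
  · rw [if_neg hjk]
    refine sum_eq_zero fun a _ => ?_
    by_cases hja : (j : ℕ) = a
    · rw [if_pos hja, if_neg fun hka => hjk (Fin.ext (hja.trans hka.symm)), mul_zero]
    · rw [if_neg hja, zero_mul]

theorem stmt_13_general {n l s : ℕ} (hln : l ≤ n)
    (σ2 : ℝ) (hσ2 : 0 < σ2)
    (U : Matrix (Fin n) (Fin n) ℝ) (hU : Uᵀ * U = 1)
    (lam : Fin n → ℝ)
    (hmono : ∀ i j : Fin n, i ≤ j → lam j ≤ lam i)
    (hpos : ∀ i : Fin n, (i : ℕ) < s → 0 < lam i)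
    (hzero : ∀ i : Fin n, s ≤ (i : ℕ) → lam i = 0)
    (Sx : Matrix (Fin n) (Fin n) ℝ) (hSx : Sx = U * Matrix.diagonal lam * Uᵀ)
    (η : ℝ) (hη : 0 < η)
    (hsum : ∑ i ∈ Finset.univ.filter (fun i : Fin l => (i : ℕ) < min l s),
        max (η - σ2 / lam (Fin.castLE hln i)) 0 = (l : ℝ))
    (d : Fin l → ℝ)
    (hd : ∀ i : Fin l, d i =
        if (i : ℕ) < min l s then max (η - σ2 / lam (Fin.castLE hln i)) 0 else 0)
    (Φstar : Matrix (Fin l) (Fin n) ℝ)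
    (hΦstar : Φstar = (Matrix.of fun (i : Fin l) (j : Fin n) =>
        if (j : ℕ) = (i : ℕ) then Real.sqrt (d i) else 0) * Uᵀ) :
    ∀ Φ : Matrix (Fin l) (Fin n) ℝ, (Φ * Φᵀ).trace ≤ (l : ℝ) →
      (Sx - Sx * Φstarᵀ
          * (σ2 • (1 : Matrix (Fin l) (Fin l) ℝ) + Φstar * Sx * Φstarᵀ)⁻¹ * Φstar * Sx).trace
        ≤ (Sx - Sx * Φᵀ
          * (σ2 • (1 : Matrix (Fin l) (Fin l) ℝ) + Φ * Sx * Φᵀ)⁻¹ * Φ * Sx).trace := by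
  intro Φ hΦ
  have hlam : ∀ i, 0 ≤ lam i := fun i =>
    (lt_or_ge (i : ℕ) s).elim (fun h => (hpos i h).le) fun h => (hzero i h).ge
  have hd' : d = fun a => wfPower σ2 η (lam (Fin.castLE hln a)) := funext fun a => by
    rw [hd]
    split_ifs with h
    · exact (wfPower_eq_max (hpos _ (h.trans_le (min_le_right l s)))).symm
    · rw [hzero _ (by simp at h ⊢; omega), wfPower_zero hσ2]
  subst hd' hSx hΦstar
  obtain ⟨V, β, hV, hβ, hsupp, hcard, hbudget, hmmse⟩ := exists_gaussianMMSE_eq_sum hσ2 hU hlam Φ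
  have hE := padded_sqrt_diagonal_transpose_mul_self hln _ fun j => wfPower_nonneg hσ2 hη (lam j)
  change gaussianMMSE σ2 _ _ ≤ gaussianMMSE σ2 _ _
  rw [hmmse, gaussianMMSE_mul_transpose_eq_sum hσ2 hU hlam hE]
  refine waterfilling_le hσ2 hη lam hlam _ (fun i hi k hk => hmono i k (Fin.le_def.2 ?_))
    (fun j i => V i j ^ 2) (fun _ _ => sq_nonneg _) (sum_sq_col_eq_one hV)
    (sum_sq_row_eq_one hV) β hβ (fun j i hj hi => by simp [hsupp j i hj hi])
    (by simpa using hcard) (hbudget.trans (hΦ.trans ?_))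
  · rw [Fin.mem_map_castLEEmb_univ] at hi hk
    omega
  · rw [← hsum, sum_filter, sum_map]
    exact (sum_congr rfl fun a _ => (hd a).symm).le

/-- With Σ_x = U·diag(λ)·Uᵀ, λ₁ ≥ … ≥ λ_s > 0, λᵢ = 0 for i > s, σ² > 0,
η > 0 satisfying the water-filling normalization ∑_{i=1}^{min(ℓ,s)} max(η − σ²/λᵢ, 0) = ℓ,
dᵢ = max(η − σ²/λᵢ, 0) for i ≤ min(ℓ,s), dᵢ = 0 otherwise, and
Φ* = [diag(√d₁,…,√d_ℓ) 0]·Uᵀ, the kernel Φ* minimizes the Gaussian MMSE among all ℓ×n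
kernels Φ with tr(Φ·Φᵀ) ≤ ℓ. -/
theorem stmt_13 {n l s : ℕ} (hl : 1 ≤ l) (hln : l ≤ n) (hs : s ≤ n)
    (σ2 : ℝ) (hσ2 : 0 < σ2)
    (U : Matrix (Fin n) (Fin n) ℝ) (hU : Uᵀ * U = 1)
    (lam : Fin n → ℝ)
    (hmono : ∀ i j : Fin n, i ≤ j → lam j ≤ lam i)
    (hpos : ∀ i : Fin n, (i : ℕ) < s → 0 < lam i)
    (hzero : ∀ i : Fin n, s ≤ (i : ℕ) → lam i = 0)
    (Sx : Matrix (Fin n) (Fin n) ℝ) (hSx : Sx = U * Matrix.diagonal lam * Uᵀ)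
    (η : ℝ) (hη : 0 < η)
    (hsum : ∑ i ∈ Finset.univ.filter (fun i : Fin l => (i : ℕ) < min l s),
        max (η - σ2 / lam (Fin.castLE hln i)) 0 = (l : ℝ))
    (d : Fin l → ℝ)
    (hd : ∀ i : Fin l, d i =
        if (i : ℕ) < min l s then max (η - σ2 / lam (Fin.castLE hln i)) 0 else 0)
    (Φstar : Matrix (Fin l) (Fin n) ℝ)
    (hΦstar : Φstar = (Matrix.of fun (i : Fin l) (j : Fin n) =>
        if (j : ℕ) = (i : ℕ) then Real.sqrt (d i) else 0) * Uᵀ) :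
    ∀ Φ : Matrix (Fin l) (Fin n) ℝ, (Φ * Φᵀ).trace ≤ (l : ℝ) →
      (Sx - Sx * Φstarᵀ
          * (σ2 • (1 : Matrix (Fin l) (Fin l) ℝ) + Φstar * Sx * Φstarᵀ)⁻¹ * Φstar * Sx).trace
        ≤ (Sx - Sx * Φᵀ
          * (σ2 • (1 : Matrix (Fin l) (Fin l) ℝ) + Φ * Sx * Φᵀ)⁻¹ * Φ * Sx).trace :=
  stmt_13_general hln σ2 hσ2 U hU lam hmono hpos hzero Sx hSx η hη hsum d hd Φstar hΦstar
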